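/- Let 𝔽₂ = ℤ/2 and let A be the quotient of the Laurent polynomial ring in one variable a over the polynomial ring 𝔽₂[τ, α₃, α₄] by the ideal generated by α₄². Let d be the 𝔽₂-linear derivation on A determined by d(τ) = 0, d(a) = 0, d(a⁻¹) = 0, d(α₄) = 0, and d(α₃) = τ·a⁴. Then d ∘ d = 0, and the natural map from the subalgebra of A generated by a, a⁻¹, α₃², α₄ to the homology ker(d)/im(d) is an isomorphism of 𝔽₂-algebras; in particular ker(d)/im(d) ≅ 𝔽₂[a^{±1}, α₃², α₄]/(α₄²). -/

import Mathlib

open MvPolynomial LaurentPolynomial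

set_option maxHeartbeats 1000000
set_option synthInstance.maxHeartbeats 400000

noncomputable section

/-- The Laurent polynomial ring `𝔽₂[τ, α₃, α₄][a, a⁻¹]`, with `X 0 = τ`,
`X 1 = α₃` and `X 2 = α₄`. -/
abbrev LA := LaurentPolynomial (MvPolynomial (Fin 3) (ZMod 2))

/-- The ideal `(α₄²)`. -/
abbrev IA : Ideal LA := Ideal.span {(LaurentPolynomial.C (X 2)) ^ 2}

/-- The ring `A = 𝔽₂[τ, a^{±1}, α₃, α₄]/(α₄²)`. -/
abbrev A := LA ⧸ IA

/-- The element `τ` of `A`. -/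
abbrev Atau : A := Ideal.Quotient.mk IA (LaurentPolynomial.C (X 0))

/-- The element `a` of `A`. -/
abbrev Aa : A := Ideal.Quotient.mk IA (LaurentPolynomial.T 1)

/-- The element `a⁻¹` of `A`. -/
abbrev AaInv : A := Ideal.Quotient.mk IA (LaurentPolynomial.T (-1))

/-- The element `α₃` of `A`. -/
abbrev Aal3 : A := Ideal.Quotient.mk IA (LaurentPolynomial.C (X 1))

/-- The element `α₄` of `A`. -/
abbrev Aal4 : A := Ideal.Quotient.mk IA (LaurentPolynomial.C (X 2))

/-- The kernel of a derivation `d` on `A`, as an `𝔽₂`-subalgebra of `A`. -/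
def kerDer (d : Derivation (ZMod 2) A A) : Subalgebra (ZMod 2) A where
  carrier := {x | d x = 0}
  add_mem' := by intro a b ha hb; simp only [Set.mem_setOf_eq] at *; simp [ha, hb]
  mul_mem' := by
    intro a b ha hb
    simp only [Set.mem_setOf_eq] at *
    rw [Derivation.leibniz, ha, hb, smul_zero, smul_zero, add_zero]
  algebraMap_mem' := by intro r; simp [Set.mem_setOf_eq]

/-- The image of a derivation `d`, as an ideal of the subalgebra `ker(d)`. -/
def imDer (d : Derivation (ZMod 2) A A) : Ideal (kerDer d) :=
  Ideal.span {x : kerDer d | ∃ y : A, d y = (x : A)}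

instance imDer_isTwoSided (d : Derivation (ZMod 2) A A) : (imDer d).IsTwoSided :=
  ⟨fun b ha => mul_comm b _ ▸ (imDer d).smul_mem _ ha⟩

/-- The subalgebra of `A` generated by `a`, `a⁻¹`, `α₃²` and `α₄`. -/
def SA : Subalgebra (ZMod 2) A :=
  Algebra.adjoin (ZMod 2) {Aa, AaInv, Aal3 ^ 2, Aal4}

end


noncomputable section
abbrev R3 := MvPolynomial (Fin 3) (ZMod 2)

namespace Test
def fD (e : Fin 3 →₀ ℕ) : Fin 3 →₀ ℕ := e - Finsupp.single 1 1 + Finsupp.single 0 1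
def fs (e : Fin 3 →₀ ℕ) : Fin 3 →₀ ℕ := e - Finsupp.single 0 1 + Finsupp.single 1 1

lemma fD_a0 (e : Fin 3 →₀ ℕ) : fD e 0 = e 0 + 1 := by
  simp [fD, Finsupp.tsub_apply, Finsupp.single_apply]
lemma fD_a1 (e : Fin 3 →₀ ℕ) : fD e 1 = e 1 - 1 := by
  simp [fD, Finsupp.tsub_apply, Finsupp.single_apply]
lemma fD_a2 (e : Fin 3 →₀ ℕ) : fD e 2 = e 2 := by
  simp [fD, Finsupp.tsub_apply, Finsupp.single_apply]
lemma fs_a0 (e : Fin 3 →₀ ℕ) : fs e 0 = e 0 - 1 := by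
  simp [fs, Finsupp.tsub_apply, Finsupp.single_apply]
lemma fs_a1 (e : Fin 3 →₀ ℕ) : fs e 1 = e 1 + 1 := by
  simp [fs, Finsupp.tsub_apply, Finsupp.single_apply]
lemma fs_a2 (e : Fin 3 →₀ ℕ) : fs e 2 = e 2 := by
  simp [fs, Finsupp.tsub_apply, Finsupp.single_apply]
lemma fs_fD (e : Fin 3 →₀ ℕ) (h : e 1 ≠ 0) : fs (fD e) = e := by
  ext a; fin_cases a <;> simp [fs, fD, Finsupp.tsub_apply, Finsupp.single_apply] <;> omega
lemma fD_fs (e : Fin 3 →₀ ℕ) (h : e 0 ≠ 0) : fD (fs e) = e := by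
  ext a; fin_cases a <;> simp [fs, fD, Finsupp.tsub_apply, Finsupp.single_apply] <;> omega

def DIn (r : R3) : R3 := AddMonoidAlgebra.mapDomain fD
  (AddMonoidAlgebra.ofCoeff (Finsupp.filter (fun e => Odd (e 1)) (AddMonoidAlgebra.coeff r)))
def sIn (r : R3) : R3 := AddMonoidAlgebra.mapDomain fs
  (AddMonoidAlgebra.ofCoeff (Finsupp.filter (fun e => 1 ≤ e 0 ∧ Even (e 1)) (AddMonoidAlgebra.coeff r)))
def pIn (r : R3) : R3 :=
  AddMonoidAlgebra.ofCoeff (Finsupp.filter (fun e : Fin 3 →₀ ℕ => e 0 = 0 ∧ Even (e 1)) (AddMonoidAlgebra.coeff r))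

lemma DIn_zero : DIn 0 = 0 := by
  unfold DIn; rw [AddMonoidAlgebra.coeff_zero, Finsupp.filter_zero, AddMonoidAlgebra.ofCoeff_zero,
    AddMonoidAlgebra.mapDomain_zero]
lemma sIn_zero : sIn 0 = 0 := by
  unfold sIn; rw [AddMonoidAlgebra.coeff_zero, Finsupp.filter_zero, AddMonoidAlgebra.ofCoeff_zero,
    AddMonoidAlgebra.mapDomain_zero]
lemma pIn_zero : pIn 0 = 0 := by
  unfold pIn; rw [AddMonoidAlgebra.coeff_zero, Finsupp.filter_zero, AddMonoidAlgebra.ofCoeff_zero]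
lemma DIn_add (a b : R3) : DIn (a + b) = DIn a + DIn b := by
  unfold DIn; rw [AddMonoidAlgebra.coeff_add, Finsupp.filter_add, AddMonoidAlgebra.ofCoeff_add,
    AddMonoidAlgebra.mapDomain_add]
lemma sIn_add (a b : R3) : sIn (a + b) = sIn a + sIn b := by
  unfold sIn; rw [AddMonoidAlgebra.coeff_add, Finsupp.filter_add, AddMonoidAlgebra.ofCoeff_add,
    AddMonoidAlgebra.mapDomain_add]
lemma pIn_add (a b : R3) : pIn (a + b) = pIn a + pIn b := by
  unfold pIn; rw [AddMonoidAlgebra.coeff_add, Finsupp.filter_add, AddMonoidAlgebra.ofCoeff_add]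

def DL (x : LA) : LA := AddMonoidAlgebra.mapDomain (fun n => n + 4)
  (AddMonoidAlgebra.ofCoeff (Finsupp.mapRange DIn DIn_zero (AddMonoidAlgebra.coeff x)))
def sL (x : LA) : LA := AddMonoidAlgebra.mapDomain (fun n => n + (-4))
  (AddMonoidAlgebra.ofCoeff (Finsupp.mapRange sIn sIn_zero (AddMonoidAlgebra.coeff x)))
def pL (x : LA) : LA := AddMonoidAlgebra.ofCoeff (Finsupp.mapRange pIn pIn_zero (AddMonoidAlgebra.coeff x))

lemma DL_add (x y : LA) : DL (x + y) = DL x + DL y := by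
  unfold DL; rw [AddMonoidAlgebra.coeff_add, Finsupp.mapRange_add DIn_add, AddMonoidAlgebra.ofCoeff_add,
    AddMonoidAlgebra.mapDomain_add]
lemma sL_add (x y : LA) : sL (x + y) = sL x + sL y := by
  unfold sL; rw [AddMonoidAlgebra.coeff_add, Finsupp.mapRange_add sIn_add, AddMonoidAlgebra.ofCoeff_add,
    AddMonoidAlgebra.mapDomain_add]
lemma pL_add (x y : LA) : pL (x + y) = pL x + pL y := by
  unfold pL; rw [AddMonoidAlgebra.coeff_add, Finsupp.mapRange_add pIn_add, AddMonoidAlgebra.ofCoeff_add]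

lemma DL_zero : DL 0 = 0 := by unfold DL; rw [AddMonoidAlgebra.coeff_zero, Finsupp.mapRange_zero, AddMonoidAlgebra.ofCoeff_zero,
  AddMonoidAlgebra.mapDomain_zero]
lemma sL_zero : sL 0 = 0 := by unfold sL; rw [AddMonoidAlgebra.coeff_zero, Finsupp.mapRange_zero, AddMonoidAlgebra.ofCoeff_zero,
  AddMonoidAlgebra.mapDomain_zero]
lemma pL_zero : pL 0 = 0 := by unfold pL; rw [AddMonoidAlgebra.coeff_zero, Finsupp.mapRange_zero, AddMonoidAlgebra.ofCoeff_zero]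

lemma DL_single (n : ℤ) (e : Fin 3 →₀ ℕ) (c : ZMod 2) :
    DL (AddMonoidAlgebra.single n (AddMonoidAlgebra.single e c)) =
      if Odd (e 1) then AddMonoidAlgebra.single (n + 4) (AddMonoidAlgebra.single (fD e) c) else 0 := by
  unfold DL
  rw [AddMonoidAlgebra.coeff_single, Finsupp.mapRange_single, AddMonoidAlgebra.ofCoeff_single]
  unfold DIn
  rw [AddMonoidAlgebra.coeff_single]
  by_cases h : Odd (e 1)
  · rw [if_pos h, Finsupp.filter_single_of_pos (p := fun e : Fin 3 →₀ ℕ => Odd (e 1)) h,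
      AddMonoidAlgebra.ofCoeff_single, AddMonoidAlgebra.mapDomain_single, AddMonoidAlgebra.mapDomain_single]
  · rw [if_neg h, Finsupp.filter_single_of_neg (p := fun e : Fin 3 →₀ ℕ => Odd (e 1)) h,
      AddMonoidAlgebra.ofCoeff_zero, AddMonoidAlgebra.mapDomain_zero, AddMonoidAlgebra.single_zero,
      AddMonoidAlgebra.mapDomain_zero]

lemma sL_single (n : ℤ) (e : Fin 3 →₀ ℕ) (c : ZMod 2) :
    sL (AddMonoidAlgebra.single n (AddMonoidAlgebra.single e c)) =
      if 1 ≤ e 0 ∧ Even (e 1) then AddMonoidAlgebra.single (n + (-4)) (AddMonoidAlgebra.single (fs e) c)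
        else 0 := by
  unfold sL
  rw [AddMonoidAlgebra.coeff_single, Finsupp.mapRange_single, AddMonoidAlgebra.ofCoeff_single]
  unfold sIn
  rw [AddMonoidAlgebra.coeff_single]
  by_cases h : 1 ≤ e 0 ∧ Even (e 1)
  · rw [if_pos h, Finsupp.filter_single_of_pos (p := fun e : Fin 3 →₀ ℕ => 1 ≤ e 0 ∧ Even (e 1)) h,
      AddMonoidAlgebra.ofCoeff_single, AddMonoidAlgebra.mapDomain_single, AddMonoidAlgebra.mapDomain_single]
  · rw [if_neg h, Finsupp.filter_single_of_neg (p := fun e : Fin 3 →₀ ℕ => 1 ≤ e 0 ∧ Even (e 1)) h,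
      AddMonoidAlgebra.ofCoeff_zero, AddMonoidAlgebra.mapDomain_zero, AddMonoidAlgebra.single_zero,
      AddMonoidAlgebra.mapDomain_zero]

lemma pL_single (n : ℤ) (e : Fin 3 →₀ ℕ) (c : ZMod 2) :
    pL (AddMonoidAlgebra.single n (AddMonoidAlgebra.single e c)) =
      if e 0 = 0 ∧ Even (e 1) then AddMonoidAlgebra.single n (AddMonoidAlgebra.single e c) else 0 := by
  unfold pL
  rw [AddMonoidAlgebra.coeff_single, Finsupp.mapRange_single, AddMonoidAlgebra.ofCoeff_single]
  unfold pIn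
  rw [AddMonoidAlgebra.coeff_single]
  by_cases h : e 0 = 0 ∧ Even (e 1)
  · rw [if_pos h, Finsupp.filter_single_of_pos (p := fun e : Fin 3 →₀ ℕ => e 0 = 0 ∧ Even (e 1)) h,
      AddMonoidAlgebra.ofCoeff_single]
  · rw [if_neg h, Finsupp.filter_single_of_neg (p := fun e : Fin 3 →₀ ℕ => e 0 = 0 ∧ Even (e 1)) h,
      AddMonoidAlgebra.ofCoeff_zero, AddMonoidAlgebra.single_zero]

def sgl (n : ℤ) (e : Fin 3 →₀ ℕ) (c : ZMod 2) : LA :=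
  AddMonoidAlgebra.single n (AddMonoidAlgebra.single e c)

lemma DL_sgl (n : ℤ) (e : Fin 3 →₀ ℕ) (c : ZMod 2) :
    DL (sgl n e c) = if Odd (e 1) then sgl (n + 4) (fD e) c else 0 := DL_single n e c

lemma sL_sgl (n : ℤ) (e : Fin 3 →₀ ℕ) (c : ZMod 2) :
    sL (sgl n e c) = if 1 ≤ e 0 ∧ Even (e 1) then sgl (n + (-4)) (fs e) c else 0 := sL_single n e c

lemma pL_sgl (n : ℤ) (e : Fin 3 →₀ ℕ) (c : ZMod 2) :
    pL (sgl n e c) = if e 0 = 0 ∧ Even (e 1) then sgl n e c else 0 := pL_single n e c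

lemma LA_induction (P : LA → Prop) (h0 : P 0) (hadd : ∀ x y, P x → P y → P (x + y))
    (hmono : ∀ (n : ℤ) (e : Fin 3 →₀ ℕ) (c : ZMod 2), P (sgl n e c)) :
    ∀ x, P x := by
  intro x
  induction x using AddMonoidAlgebra.induction_linear with
  | zero => exact h0
  | add f g hf hg => exact hadd f g hf hg
  | single n r =>
    induction r using AddMonoidAlgebra.induction_linear with
    | zero => rw [AddMonoidAlgebra.single_zero]; exact h0
    | add f g hf hg => rw [AddMonoidAlgebra.single_add]; exact hadd _ _ hf hg
    | single e c => exact hmono n e c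

lemma DL_DL (x : LA) : DL (DL x) = 0 := by
  induction x using LA_induction with
  | h0 => rw [DL_zero, DL_zero]
  | hadd x y hx hy => rw [DL_add, DL_add, hx, hy, add_zero]
  | hmono n e c =>
    rw [DL_sgl]
    by_cases h : Odd (e 1)
    · rw [if_pos h, DL_sgl, if_neg]
      rw [fD_a1]
      obtain ⟨k, hk⟩ := h
      simp [hk]
    · rw [if_neg h, DL_zero]

lemma homotopy (x : LA) : DL (sL x) + sL (DL x) + pL x = x := by
  induction x using LA_induction with
  | h0 => rw [sL_zero, DL_zero, sL_zero, pL_zero, add_zero, add_zero]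
  | hadd x y hx hy =>
    rw [DL_add, sL_add, sL_add, DL_add, pL_add]
    calc DL (sL x) + DL (sL y) + (sL (DL x) + sL (DL y)) + (pL x + pL y)
        = (DL (sL x) + sL (DL x) + pL x) + (DL (sL y) + sL (DL y) + pL y) := by ring
      _ = x + y := by rw [hx, hy]
  | hmono n e c =>
    rw [DL_sgl, sL_sgl]
    by_cases h1 : Odd (e 1)
    · have h2 : ¬(1 ≤ e 0 ∧ Even (e 1)) := by
        rintro ⟨-, h⟩; exact (Nat.not_even_iff_odd.mpr h1) h
      have h3 : ¬(e 0 = 0 ∧ Even (e 1)) := by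
        rintro ⟨-, h⟩; exact (Nat.not_even_iff_odd.mpr h1) h
      have hfd : 1 ≤ fD e 0 ∧ Even (fD e 1) := by
        constructor
        · rw [fD_a0]; omega
        · rw [fD_a1]; obtain ⟨k, hk⟩ := h1; simp [hk]
      have hne : e 1 ≠ 0 := by obtain ⟨k, hk⟩ := h1; omega
      have hn4 : n + 4 + -4 = n := by ring
      rw [if_neg h2, if_pos h1, pL_sgl, if_neg h3, DL_zero, sL_sgl, if_pos hfd,
        fs_fD e hne, hn4, zero_add, add_zero]
    · have he : Even (e 1) := Nat.not_odd_iff_even.mp h1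
      rw [if_neg h1, sL_zero, add_zero, pL_sgl]
      by_cases h0 : e 0 = 0
      · have h2 : ¬(1 ≤ e 0 ∧ Even (e 1)) := by rintro ⟨h, -⟩; omega
        rw [if_neg h2, DL_zero, zero_add, if_pos ⟨h0, he⟩]
      · have h2 : (1 ≤ e 0 ∧ Even (e 1)) := ⟨by omega, he⟩
        have hfs : Odd (fs e 1) := by
          rw [fs_a1]; exact Even.add_one he
        have hn4 : n + -4 + 4 = n := by ring
        rw [if_pos h2, if_neg (by rintro ⟨h, -⟩; exact h0 h), add_zero, DL_sgl, if_pos hfs,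
          fD_fs e h0, hn4]

lemma pL_DL (x : LA) : pL (DL x) = 0 := by
  induction x using LA_induction with
  | h0 => rw [DL_zero, pL_zero]
  | hadd x y hx hy => rw [DL_add, pL_add, hx, hy, add_zero]
  | hmono n e c =>
    rw [DL_sgl]
    by_cases h : Odd (e 1)
    · rw [if_pos h, pL_sgl, if_neg]
      rintro ⟨h0, -⟩
      rw [fD_a0] at h0
      omega
    · rw [if_neg h, pL_zero]


def gL : LA := (LaurentPolynomial.C (X 2)) ^ 2

lemma oneR3 : (1 : R3) = AddMonoidAlgebra.single 0 1 := by
  rw [single_eq_monomial, monomial_zero', C_1]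

lemma C_eq (q : R3) : (LaurentPolynomial.C q : LA) = AddMonoidAlgebra.single 0 q := by
  rw [single_eq_C_mul_T, T_zero, mul_one]

lemma T_eq (n : ℤ) : (T n : LA) = AddMonoidAlgebra.single n (AddMonoidAlgebra.single 0 1) := by
  rw [← oneR3]; rfl

lemma sgl_mul (n n' : ℤ) (e e' : Fin 3 →₀ ℕ) (c c' : ZMod 2) :
    sgl n e c * sgl n' e' c' = sgl (n + n') (e + e') (c * c') := by
  unfold sgl
  rw [single_eq_C_mul_T, single_eq_C_mul_T, single_eq_C_mul_T, T_add,
    single_eq_monomial, single_eq_monomial, single_eq_monomial,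
    ← MvPolynomial.monomial_mul, map_mul, mul_mul_mul_comm, ← mul_assoc]

lemma gL_sgl : gL = sgl 0 (Finsupp.single 2 2) 1 := by
  unfold sgl
  rw [gL, ← map_pow, C_eq, X_pow_eq_monomial, single_eq_monomial]

lemma gL_mul_sgl (n : ℤ) (e : Fin 3 →₀ ℕ) (c : ZMod 2) :
    gL * sgl n e c = sgl n (Finsupp.single 2 2 + e) c := by
  rw [gL_sgl, sgl_mul, zero_add, one_mul]

lemma pL_gL (x : LA) : pL (gL * x) = gL * pL x := by
  induction x using LA_induction with
  | h0 => rw [mul_zero, pL_zero, mul_zero]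
  | hadd x y hx hy => rw [mul_add, pL_add, pL_add, mul_add, hx, hy]
  | hmono n e c =>
    rw [gL_mul_sgl, pL_sgl, pL_sgl]
    have h0 : (Finsupp.single 2 2 + e : Fin 3 →₀ ℕ) 0 = e 0 := by
      simp [Finsupp.add_apply, Finsupp.single_apply]
    have h1 : (Finsupp.single 2 2 + e : Fin 3 →₀ ℕ) 1 = e 1 := by
      simp [Finsupp.add_apply, Finsupp.single_apply]
    by_cases h : e 0 = 0 ∧ Even (e 1)
    · rw [if_pos h, if_pos (by rw [h0, h1]; exact h), gL_mul_sgl]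
    · rw [if_neg h, if_neg (by rw [h0, h1]; exact h), mul_zero]

lemma fs_gadd (e : Fin 3 →₀ ℕ) :
    fs (Finsupp.single 2 2 + e) = Finsupp.single 2 2 + fs e := by
  ext a; fin_cases a <;> simp [fs, Finsupp.tsub_apply, Finsupp.single_apply]

lemma sL_gL (x : LA) : sL (gL * x) = gL * sL x := by
  induction x using LA_induction with
  | h0 => rw [mul_zero, sL_zero, mul_zero]
  | hadd x y hx hy => rw [mul_add, sL_add, sL_add, mul_add, hx, hy]
  | hmono n e c =>
    rw [gL_mul_sgl, sL_sgl, sL_sgl]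
    have h0 : (Finsupp.single 2 2 + e : Fin 3 →₀ ℕ) 0 = e 0 := by
      simp [Finsupp.add_apply, Finsupp.single_apply]
    have h1 : (Finsupp.single 2 2 + e : Fin 3 →₀ ℕ) 1 = e 1 := by
      simp [Finsupp.add_apply, Finsupp.single_apply]
    by_cases h : 1 ≤ e 0 ∧ Even (e 1)
    · rw [if_pos h, if_pos (by rw [h0, h1]; exact h), gL_mul_sgl, fs_gadd]
    · rw [if_neg h, if_neg (by rw [h0, h1]; exact h), mul_zero]

lemma pL_IA {z : LA} (hz : z ∈ IA) : pL z ∈ IA := by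
  rw [Ideal.mem_span_singleton] at hz ⊢
  obtain ⟨c, rfl⟩ := hz
  exact ⟨pL c, pL_gL c⟩

lemma sL_IA {z : LA} (hz : z ∈ IA) : sL z ∈ IA := by
  rw [Ideal.mem_span_singleton] at hz ⊢
  obtain ⟨c, rfl⟩ := hz
  exact ⟨sL c, sL_gL c⟩

lemma pL_mul_pL (x y : LA) : pL (pL x * pL y) = pL x * pL y := by
  induction x using LA_induction with
  | h0 => rw [pL_zero, zero_mul, pL_zero]
  | hadd x x' hx hx' => rw [pL_add, add_mul, pL_add, hx, hx']
  | hmono n e c =>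
    induction y using LA_induction with
    | h0 => rw [pL_zero, mul_zero, pL_zero]
    | hadd y y' hy hy' => rw [pL_add, mul_add, pL_add, hy, hy']
    | hmono n' e' c' =>
      rw [pL_sgl, pL_sgl]
      by_cases h : e 0 = 0 ∧ Even (e 1)
      · by_cases h' : e' 0 = 0 ∧ Even (e' 1)
        · rw [if_pos h, if_pos h', sgl_mul, pL_sgl, if_pos]
          constructor
          · simp [Finsupp.add_apply, h.1, h'.1]
          · simp only [Finsupp.add_apply]
            exact h.2.add h'.2
        · rw [if_pos h, if_neg h', mul_zero, pL_zero]
      · rw [if_neg h, zero_mul, pL_zero]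

lemma pL_fix_mul {x y : LA} (hx : pL x = x) (hy : pL y = y) : pL (x * y) = x * y := by
  rw [← hx, ← hy, pL_mul_pL]




namespace Test

lemma zmod2_cases (c : ZMod 2) : c = 0 ∨ c = 1 := by revert c; decide

def WA : Subalgebra (ZMod 2) LA :=
  Algebra.adjoin (ZMod 2)
    {T 1, T (-1), (LaurentPolynomial.C (X 1)) ^ 2, LaurentPolynomial.C (X 2)}

lemma T_sgl (n : ℤ) : (T n : LA) = sgl n 0 1 := by
  unfold sgl; rw [← oneR3]; rfl

lemma one_sgl : (1 : LA) = sgl 0 0 1 := by rw [← T_sgl]; exact (T_zero).symm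

lemma C1sq_sgl : (LaurentPolynomial.C (X 1 : R3)) ^ 2 = sgl 0 (Finsupp.single 1 2) 1 := by
  unfold sgl; rw [← map_pow, C_eq, X_pow_eq_monomial, single_eq_monomial]

lemma C2_sgl : (LaurentPolynomial.C (X 2 : R3)) = sgl 0 (Finsupp.single 2 1) 1 := by
  unfold sgl; rw [← pow_one (X 2 : R3), C_eq, X_pow_eq_monomial, single_eq_monomial]

lemma pL_one : pL 1 = 1 := by
  rw [one_sgl, pL_sgl, if_pos]
  simp

lemma pL_WA {w : LA} (hw : w ∈ WA) : pL w = w := by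
  induction hw using Algebra.adjoin_induction with
  | mem x hx =>
    rcases hx with rfl | rfl | rfl | rfl
    · rw [T_sgl, pL_sgl, if_pos] ; simp
    · rw [T_sgl, pL_sgl, if_pos] ; simp
    · rw [C1sq_sgl, pL_sgl, if_pos]
      simp [Finsupp.single_apply]
    · rw [C2_sgl, pL_sgl, if_pos]
      simp [Finsupp.single_apply]
  | algebraMap r =>
    rcases zmod2_cases r with rfl | rfl
    · rw [map_zero, pL_zero]
    · rw [map_one, pL_one]
  | add x y hx hy ihx ihy => rw [pL_add, ihx, ihy]
  | mul x y hx hy ihx ihy => exact pL_fix_mul ihx ihy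

def mkI : LA →+* A := Ideal.Quotient.mk IA

def Mo (i j k : ℕ) (n : ℤ) : A :=
  Atau ^ i * Aal3 ^ j * Aal4 ^ k * mkI (T n)

lemma sgl_eq_prod (n : ℤ) (e : Fin 3 →₀ ℕ) :
    sgl n e 1 = LaurentPolynomial.C (X 0 ^ e 0 * X 1 ^ e 1 * X 2 ^ e 2 : R3) * T n := by
  unfold sgl
  rw [single_eq_C_mul_T, single_eq_monomial, monomial_eq, C_1, one_mul]
  congr 2
  rw [Finsupp.prod_fintype _ _ (fun i => pow_zero _), Fin.prod_univ_three]

lemma mk_sgl_one (n : ℤ) (e : Fin 3 →₀ ℕ) :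
    mkI (sgl n e 1) = Mo (e 0) (e 1) (e 2) n := by
  rw [sgl_eq_prod]
  simp only [map_mul, map_pow]
  rfl

lemma sgl_zero (n : ℤ) (e : Fin 3 →₀ ℕ) : sgl n e 0 = 0 := by
  unfold sgl; rw [AddMonoidAlgebra.single_zero, AddMonoidAlgebra.single_zero]

lemma mkT_mem (n : ℤ) : mkI (T n) ∈ SA := by
  have hAa : Aa ∈ SA := Algebra.subset_adjoin (by simp)
  have hAaInv : AaInv ∈ SA := Algebra.subset_adjoin (by simp)
  rcases n with m | m
  · have hT : (T (Int.ofNat m) : LA) = T 1 ^ m := by rw [T_pow, mul_one]; rfl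
    rw [hT, map_pow]
    exact pow_mem hAa m
  · have hT : (T (Int.negSucc m) : LA) = T (-1) ^ (m + 1) := by
      rw [T_pow, Int.negSucc_eq]
      norm_num
    rw [hT, map_pow]
    exact pow_mem hAaInv (m + 1)

lemma mk_good_mem (n : ℤ) (e : Fin 3 →₀ ℕ) (c : ZMod 2) (he0 : e 0 = 0) (he1 : Even (e 1)) :
    mkI (sgl n e c) ∈ SA := by
  rcases zmod2_cases c with rfl | rfl
  · rw [sgl_zero, map_zero]; exact zero_mem _
  · rw [mk_sgl_one]
    unfold Mo
    obtain ⟨m, hm⟩ := he1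
    rw [he0, pow_zero, one_mul, show e 1 = 2 * m by omega, pow_mul]
    have h3 : (Aal3 ^ 2 : A) ∈ SA := Algebra.subset_adjoin (by simp)
    have h4 : (Aal4 : A) ∈ SA := Algebra.subset_adjoin (by simp)
    exact mul_mem (mul_mem (pow_mem h3 m) (pow_mem h4 _)) (mkT_mem n)

lemma mk_pL_mem (x : LA) : mkI (pL x) ∈ SA := by
  induction x using LA_induction with
  | h0 => rw [pL_zero, map_zero]; exact zero_mem _
  | hadd x y hx hy => rw [pL_add, map_add]; exact add_mem hx hy
  | hmono n e c =>
    rw [pL_sgl]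
    by_cases h : e 0 = 0 ∧ Even (e 1)
    · rw [if_pos h]; exact mk_good_mem n e c h.1 h.2
    · rw [if_neg h, map_zero]; exact zero_mem _

end Test


namespace Test

lemma zmod2_odd {m : ℕ} (h : Odd m) : (m : ZMod 2) = 1 := by
  obtain ⟨k, rfl⟩ := h
  push_cast
  rw [show (2 : ZMod 2) = 0 by decide]
  ring

lemma zmod2_even {m : ℕ} (h : Even m) : (m : ZMod 2) = 0 := by
  obtain ⟨k, rfl⟩ := h
  push_cast
  rw [← two_mul, show (2 : ZMod 2) = 0 by decide, zero_mul]

lemma add_self_A (y : A) : y + y = 0 := by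
  have h2 : ((1 : ZMod 2) + 1) • y = y + y := by rw [add_smul, one_smul]
  rw [← h2, show (1 : ZMod 2) + 1 = 0 by decide, zero_smul]

lemma nsmul_eq (j : ℕ) (z : A) : j • z = ((j : ZMod 2)) • z := by
  induction j with
  | zero => rw [zero_smul, Nat.cast_zero, zero_smul]
  | succ k ih => rw [succ_nsmul, ih, Nat.cast_succ, add_smul, one_smul]

section DSec

variable (d : Derivation (ZMod 2) A A)

lemma d_pow_zero {x : A} (hx : d x = 0) (m : ℕ) : d (x ^ m) = 0 := by
  rw [Derivation.leibniz_pow, hx, smul_zero, smul_zero]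

variable (htau : d Atau = 0) (ha : d Aa = 0) (haInv : d AaInv = 0) (h4 : d Aal4 = 0)
  (h3 : d Aal3 = Atau * Aa ^ 4)

include ha in
lemma d_Aa' : d (mkI (T 1)) = 0 := ha

include haInv in
lemma d_AaInv' : d (mkI (T (-1))) = 0 := haInv

include ha haInv in
lemma d_mkT (n : ℤ) : d (mkI (T n)) = 0 := by
  induction n using Int.induction_on with
  | zero =>
    rw [show (T 0 : LA) = 1 from T_zero, map_one]
    exact d.map_one_eq_zero
  | succ m ih =>
    rw [show (T ((m : ℤ) + 1) : LA) = T m * T 1 from T_add m 1, map_mul, Derivation.leibniz,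
      ih, d_Aa' d ha, smul_zero, smul_zero, add_zero]
  | pred m ih =>
    rw [show (T (-(m : ℤ) - 1) : LA) = T (-m) * T (-1) by
        rw [show (-(m : ℤ) - 1) = -(m : ℤ) + -1 by ring, T_add], map_mul,
      Derivation.leibniz, ih, d_AaInv' d haInv, smul_zero, smul_zero, add_zero]

include h3 in
lemma d_al3_pow (j : ℕ) : d (Aal3 ^ j) = (j : ZMod 2) • (Aal3 ^ (j - 1) * (Atau * Aa ^ 4)) := by
  rw [Derivation.leibniz_pow, h3, smul_eq_mul, nsmul_eq]

include htau ha haInv h4 h3 in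
lemma d_Mo (i j k : ℕ) (n : ℤ) :
    d (Mo i j k n) = (j : ZMod 2) • Mo (i + 1) (j - 1) k (n + 4) := by
  have e4 : (Aa : A) ^ 4 = mkI (T 4) := by
    rw [show (Aa : A) ^ 4 = mkI (T 1 ^ 4) from (map_pow mkI _ 4).symm, T_pow, mul_one]
    norm_num
  have eT : mkI (T (n + 4)) = mkI (T n) * mkI (T 4) := by rw [← map_mul, ← T_add]
  unfold Mo
  rw [Derivation.leibniz, d_mkT d ha haInv, smul_zero, zero_add,
    Derivation.leibniz, d_pow_zero d h4, smul_zero, zero_add,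
    Derivation.leibniz, d_pow_zero d htau, smul_zero, add_zero,
    d_al3_pow d h3]
  simp only [smul_eq_mul, mul_smul_comm]
  congr 1
  rw [e4, eT, pow_succ]
  ring

include htau ha haInv h4 h3 in
lemma d_mk (x : LA) : d (mkI x) = mkI (DL x) := by
  induction x using LA_induction with
  | h0 => rw [map_zero, map_zero, DL_zero, map_zero]
  | hadd x y hx hy => rw [map_add, map_add, hx, hy, DL_add, map_add]
  | hmono n e c =>
    rcases zmod2_cases c with rfl | rfl
    · rw [sgl_zero, map_zero, map_zero, DL_zero, map_zero]
    · rw [mk_sgl_one, d_Mo d htau ha haInv h4 h3, DL_sgl]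
      by_cases h : Odd (e 1)
      · rw [if_pos h, mk_sgl_one, fD_a0, fD_a1, fD_a2, zmod2_odd h, one_smul]
      · rw [if_neg h, map_zero mkI, zmod2_even (Nat.not_odd_iff_even.mp h), zero_smul]


include ha haInv h4 h3 htau in
lemma d_d (x : A) : d (d x) = 0 := by
  obtain ⟨y, rfl⟩ := Ideal.Quotient.mk_surjective x
  have h : d (d (mkI y)) = 0 := by
    rw [d_mk d htau ha haInv h4 h3, d_mk d htau ha haInv h4 h3, DL_DL, map_zero]
  exact h

include ha haInv h4 in
lemma hS_ker : SA ≤ kerDer d := by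
  apply Algebra.adjoin_le
  intro x hx
  simp only [Set.mem_insert_iff, Set.mem_singleton_iff] at hx
  rcases hx with rfl | rfl | rfl | rfl
  · exact ha
  · exact haInv
  · show d (Aal3 ^ 2) = 0
    rw [pow_two, Derivation.leibniz]
    exact add_self_A _
  · exact h4

def Jd : Ideal (kerDer d) where
  carrier := {z | ∃ y : A, d y = (z : A)}
  zero_mem' := ⟨0, by rw [map_zero]; rfl⟩
  add_mem' := by
    rintro a b ⟨y, hy⟩ ⟨y', hy'⟩
    exact ⟨y + y', by rw [map_add, hy, hy']; rfl⟩
  smul_mem' := by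
    rintro c z ⟨y, hy⟩
    have hc : d (c : A) = 0 := c.2
    exact ⟨(c : A) * y, by
      rw [Derivation.leibniz, hy, hc, smul_zero, add_zero, smul_eq_mul]; rfl⟩

lemma imDer_le : imDer d ≤ Jd d := Ideal.span_le.mpr (fun _ hx => hx)

lemma SA_le_map : SA ≤ WA.map (Ideal.Quotient.mkₐ (ZMod 2) IA) := by
  apply Algebra.adjoin_le
  intro x hx
  simp only [Set.mem_insert_iff, Set.mem_singleton_iff] at hx
  rcases hx with rfl | rfl | rfl | rfl
  · exact Subalgebra.mem_map.mpr ⟨T 1, Algebra.subset_adjoin (by simp [WA]), rfl⟩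
  · exact Subalgebra.mem_map.mpr ⟨T (-1), Algebra.subset_adjoin (by simp [WA]), rfl⟩
  · exact Subalgebra.mem_map.mpr
      ⟨(LaurentPolynomial.C (X 1)) ^ 2, Algebra.subset_adjoin (by simp [WA]), by rw [map_pow]; rfl⟩
  · exact Subalgebra.mem_map.mpr
      ⟨LaurentPolynomial.C (X 2), Algebra.subset_adjoin (by simp [WA]), rfl⟩

include htau ha haInv h4 h3 in
theorem main :
    (∀ x : A, d (d x) = 0) ∧
    ∃ hS : SA ≤ kerDer d,
      Function.Bijective
        ((Ideal.Quotient.mkₐ (ZMod 2) (imDer d)).comp (Subalgebra.inclusion hS)) := by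
  refine ⟨d_d d htau ha haInv h4 h3, hS_ker d ha haInv h4, ?_, ?_⟩
  · -- injectivity
    rw [injective_iff_map_eq_zero]
    intro x hx
    have hmem : (Subalgebra.inclusion (hS_ker d ha haInv h4) x) ∈ imDer d := by
      rwa [AlgHom.comp_apply, Ideal.Quotient.mkₐ_eq_mk, Ideal.Quotient.eq_zero_iff_mem] at hx
    obtain ⟨y, hy⟩ := imDer_le d hmem
    have hy' : d y = (x : A) := hy
    obtain ⟨w, hwWA, hww⟩ := SA_le_map x.2
    have hww' : mkI w = (x : A) := hww
    obtain ⟨y', rfl⟩ := Ideal.Quotient.mk_surjective y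
    have h1 : mkI w = mkI (DL y') := by
      rw [← d_mk d htau ha haInv h4 h3, hww']
      exact hy'.symm
    have h2 : w - DL y' ∈ IA := Ideal.Quotient.eq.mp h1
    have h3' : pL w = pL (w - DL y') := by
      conv_lhs => rw [show w = DL y' + (w - DL y') by rw [add_comm, sub_add_cancel]]
      rw [pL_add, pL_DL, zero_add]
    have hwIA : w ∈ IA := by
      rw [← pL_WA hwWA, h3']
      exact pL_IA h2
    have hx0 : (x : A) = 0 := by
      rw [← hww']
      exact Ideal.Quotient.eq_zero_iff_mem.mpr hwIA
    exact Subtype.ext hx0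
  · -- surjectivity
    intro q
    obtain ⟨z, rfl⟩ := Ideal.Quotient.mk_surjective q
    obtain ⟨y, hy⟩ := Ideal.Quotient.mk_surjective (z : A)
    have hy' : mkI y = (z : A) := hy
    have hdz : d (z : A) = 0 := z.2
    have hDLy : mkI (DL y) = 0 := by
      rw [← d_mk d htau ha haInv h4 h3, hy', hdz]
    have hIA : DL y ∈ IA := Ideal.Quotient.eq_zero_iff_mem.mp hDLy
    have hs0 : mkI (sL (DL y)) = 0 := Ideal.Quotient.eq_zero_iff_mem.mpr (sL_IA hIA)
    have key : (z : A) = mkI (pL y) + d (mkI (sL y)) := by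
      have h := congrArg mkI (homotopy y)
      rw [map_add, map_add, hs0, add_zero, hy'] at h
      rw [← h, d_mk d htau ha haInv h4 h3]
      ring
    refine ⟨⟨mkI (pL y), mk_pL_mem y⟩, ?_⟩
    rw [AlgHom.comp_apply, Ideal.Quotient.mkₐ_eq_mk, Ideal.Quotient.eq]
    apply Ideal.subset_span
    refine ⟨-(mkI (sL y)), ?_⟩
    show d (-(mkI (sL y))) = _
    rw [map_neg]
    have hcoe : ((Subalgebra.inclusion (hS_ker d ha haInv h4) ⟨mkI (pL y), mk_pL_mem y⟩ - z :
        kerDer d) : A) = mkI (pL y) - (z : A) := rfl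
    rw [hcoe, key]
    ring

end DSec
end Test
end Test

end

/-- For any `𝔽₂`-linear derivation `d` on `A = 𝔽₂[τ, a^{±1}, α₃, α₄]/(α₄²)` with
`d(τ) = 0`, `d(a) = 0`, `d(a⁻¹) = 0`, `d(α₄) = 0` and `d(α₃) = τ·a⁴`, we have
`d ∘ d = 0`, and the natural `𝔽₂`-algebra map from the subalgebra of `A`
generated by `a`, `a⁻¹`, `α₃²`, `α₄` to the homology `ker(d)/im(d)` is an
isomorphism of `𝔽₂`-algebras (i.e. it is a bijective algebra homomorphism);
in particular `ker(d)/im(d) ≅ 𝔽₂[a^{±1}, α₃², α₄]/(α₄²)`. -/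
theorem localized_motivic_AdamsNovikov_homology
    (d : Derivation (ZMod 2) A A)
    (htau : d Atau = 0) (ha : d Aa = 0) (haInv : d AaInv = 0) (h4 : d Aal4 = 0)
    (h3 : d Aal3 = Atau * Aa ^ 4) :
    (∀ x : A, d (d x) = 0) ∧
    ∃ hS : SA ≤ kerDer d,
      Function.Bijective
        ((Ideal.Quotient.mkₐ (ZMod 2) (imDer d)).comp (Subalgebra.inclusion hS)) := by
  exact Test.Test.main d htau ha haInv h4 h3
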